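/- Let κ : ℝ → ℝ be continuous, bounded, and disconjugate (every Jacobi solution for κ that vanishes at two distinct points is identically zero). For each T ≠ 0 let z_T be the unique Jacobi solution for κ with z_T(0) = 1 and z_T(T) = 0. Then the limit of z_T'(0) as T → +∞ exists, and the limit of z_T'(0) as T → −∞ exists. -/

import Mathlib

/-!
Fix a Jacobi solution `u` with `u 0 = 0` and `u' 0 > 0`; by disconjugacy it has the sign of `t`.
Write `a T = (Z T)' 0`. For `S, T ≠ 0` the solution `Z S - Z T` vanishes at `0`, so by uniqueness
for the Jacobi equation it is a multiple of `u`; evaluating at `T` gives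
`Z S T * u' 0 = (a S - a T) * u T`. As `Z S` is positive between `0` and `S`, `a` is increasing on
`(0, ∞)` and on `(-∞, 0)`, and its values on `(-∞, 0)` bound those on `(0, ∞)` from above. Monotone
bounded functions converge.
-/

open Set Filter Topology

/-- A Jacobi solution for `κ` on `ℝ`: a `C²` function with `z'' + κ z = 0`. -/
def IsJacobi (κ z : ℝ → ℝ) : Prop :=
  ContDiff ℝ 2 z ∧ ∀ t, deriv (deriv z) t + κ t * z t = 0

/-- `κ` is disconjugate: every Jacobi solution for `κ` that vanishes at two
distinct points is identically zero. -/
def Disconjugate (κ : ℝ → ℝ) : Prop :=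
  ∀ z : ℝ → ℝ, IsJacobi κ z →
    ∀ a b : ℝ, a ≠ b → z a = 0 → z b = 0 → ∀ t, z t = 0

theorem IsPreconnected.pos_of_ne_zero {X α : Type*} [TopologicalSpace X] [LinearOrder α]
    [TopologicalSpace α] [OrderClosedTopology α] [Zero α] {s : Set X} {f : X → α}
    (hs : IsPreconnected s) (hf : ContinuousOn f s) (hf₀ : ∀ x ∈ s, f x ≠ 0) {x₀ : X}
    (hx₀ : x₀ ∈ s) (hpos : 0 < f x₀) {x : X} (hx : x ∈ s) : 0 < f x := by
  by_contra! hle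
  obtain ⟨y, hy, hy₀⟩ := hs.intermediate_value hx hx₀ hf ⟨hle, hpos.le⟩
  exact hf₀ y hy hy₀

theorem HasDerivAt.nonneg_of_isMinOn_Ici {f : ℝ → ℝ} {f' x : ℝ} (hf : HasDerivAt f f' x)
    (hmin : IsMinOn f (Ici x) x) : 0 ≤ f' := by
  refine ge_of_tendsto hf.tendsto_slope_zero_right ?_
  filter_upwards [self_mem_nhdsWithin] with t (ht : 0 < t)
  exact smul_nonneg (inv_nonneg.2 ht.le) (sub_nonneg.2 (hmin (by simp [ht.le])))

theorem MonotoneOn.exists_tendsto_atTop {α β : Type*} [LinearOrder α]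
    [ConditionallyCompleteLinearOrder β] [TopologicalSpace β] [OrderTopology β]
    {f : α → β} {c : α} (hf : MonotoneOn f (Ici c)) (hbdd : BddAbove (f '' Ici c)) :
    ∃ L, Tendsto f atTop (𝓝 L) := by
  have hmono : Monotone fun x => f (max x c) := fun x y hxy =>
    hf (le_max_right x c) (le_max_right y c) (max_le_max_right c hxy)
  have hbdd' : BddAbove (range fun x => f (max x c)) :=
    hbdd.mono (range_subset_iff.2 fun x => mem_image_of_mem f (le_max_right x c))
  refine ⟨_, (tendsto_atTop_ciSup hmono hbdd').congr' ?_⟩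
  filter_upwards [eventually_ge_atTop c] with x hx
  rw [max_eq_left hx]

theorem MonotoneOn.exists_tendsto_atBot {α β : Type*} [LinearOrder α]
    [ConditionallyCompleteLinearOrder β] [TopologicalSpace β] [OrderTopology β]
    {f : α → β} {c : α} (hf : MonotoneOn f (Iic c)) (hbdd : BddBelow (f '' Iic c)) :
    ∃ L, Tendsto f atBot (𝓝 L) := by
  have hmono : Monotone fun x => f (min x c) := fun x y hxy =>
    hf (min_le_right x c) (min_le_right y c) (min_le_min_right c hxy)
  have hbdd' : BddBelow (range fun x => f (min x c)) :=
    hbdd.mono (range_subset_iff.2 fun x => mem_image_of_mem f (min_le_right x c))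
  refine ⟨_, (tendsto_atBot_ciInf hmono hbdd').congr' ?_⟩
  filter_upwards [eventually_le_atBot c] with x hx
  rw [min_eq_left hx]

theorem lipschitzWith_snd_neg_mul_fst (k : ℝ) :
    LipschitzWith (max 1 ‖k‖₊) fun p : ℝ × ℝ => (p.2, -k * p.1) := by
  simpa using (LipschitzWith.prod_snd (α := ℝ) (β := ℝ)).prodMk
    ((lipschitzWith_smul (-k)).comp LipschitzWith.prod_fst)

namespace IsJacobi

variable {κ z w u : ℝ → ℝ}

theorem differentiable (hz : IsJacobi κ z) : Differentiable ℝ z :=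
  hz.1.differentiable two_ne_zero

theorem differentiable_deriv (hz : IsJacobi κ z) : Differentiable ℝ (deriv z) :=
  (hz.1.deriv' (n := 1)).differentiable one_ne_zero

theorem hasDerivAt_deriv (hz : IsJacobi κ z) (t : ℝ) :
    HasDerivAt (deriv z) (-κ t * z t) t := by
  have hz'' : deriv (deriv z) t = -κ t * z t := by linear_combination hz.2 t
  exact hz'' ▸ (hz.differentiable_deriv t).hasDerivAt

theorem sub (hz : IsJacobi κ z) (hw : IsJacobi κ w) : IsJacobi κ (z - w) := by
  have hd : deriv (z - w) = deriv z - deriv w :=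
    funext fun t => deriv_sub (hz.differentiable t) (hw.differentiable t)
  refine ⟨hz.1.sub hw.1, fun t => ?_⟩
  rw [hd, deriv_sub (hz.differentiable_deriv t) (hw.differentiable_deriv t)]
  simp only [Pi.sub_apply]
  linear_combination hz.2 t - hw.2 t

theorem const_smul (hz : IsJacobi κ z) (c : ℝ) : IsJacobi κ (c • z) := by
  have hd : deriv (c • z) = c • deriv z :=
    funext fun t => deriv_const_smul c (hz.differentiable t)
  refine ⟨hz.1.const_smul c, fun t => ?_⟩
  rw [hd, deriv_const_smul c (hz.differentiable_deriv t)]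
  simp only [Pi.smul_apply, smul_eq_mul]
  linear_combination c * hz.2 t

theorem eq_zero_of_deriv_eq_zero (hκ : Continuous κ) (hz : IsJacobi κ z) {t₀ : ℝ}
    (h₀ : z t₀ = 0) (h₁ : deriv z t₀ = 0) : z = 0 := by
  funext t
  -- `κ` is bounded on a compact interval around `t₀` and `t`, so there the first-order system
  -- `(z, z')' = (z', -κ z)` has a uniformly Lipschitz right-hand side.
  set r := |t - t₀| + 1
  obtain ⟨C, hC⟩ := (isCompact_Icc (a := t₀ - r) (b := t₀ + r)).exists_bound_of_continuousOn
    hκ.continuousOn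
  have hlip : ∀ s ∈ Ioo (t₀ - r) (t₀ + r),
      LipschitzOnWith (max 1 C.toNNReal) (fun p : ℝ × ℝ => (p.2, -κ s * p.1)) univ := by
    intro s hs
    refine ((lipschitzWith_snd_neg_mul_fst (κ s)).weaken (max_le_max le_rfl ?_)).lipschitzOnWith
    rw [← NNReal.coe_le_coe, coe_nnnorm]
    exact (hC s (Ioo_subset_Icc_self hs)).trans (Real.le_coe_toNNReal C)
  have hsol : ∀ s, HasDerivAt (fun s => (z s, deriv z s)) (deriv z s, -κ s * z s) s :=
    fun s => (hz.differentiable s).hasDerivAt.prodMk (hz.hasDerivAt_deriv s)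
  have hzero : ∀ s, HasDerivAt (fun _ => ((0 : ℝ), (0 : ℝ))) ((0 : ℝ), -κ s * 0) s := fun s => by
    rw [mul_zero]
    exact hasDerivAt_const s _
  have hr : 0 < r := by positivity
  have ht₀ : t₀ ∈ Ioo (t₀ - r) (t₀ + r) := ⟨by linarith, by linarith⟩
  have ht : t ∈ Ioo (t₀ - r) (t₀ + r) :=
    ⟨by linarith [neg_abs_le (t - t₀)], by linarith [le_abs_self (t - t₀)]⟩
  exact congrArg Prod.fst <| ODE_solution_unique_of_mem_Ioo hlip ht₀
    (fun s _ => ⟨hsol s, mem_univ _⟩) (fun s _ => ⟨hzero s, mem_univ _⟩) (by simp [h₀, h₁]) ht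

theorem eq_smul_of_apply_eq_zero (hκ : Continuous κ) (hu : IsJacobi κ u) (hw : IsJacobi κ w)
    {t₀ : ℝ} (hu₀ : u t₀ = 0) (hw₀ : w t₀ = 0) (hu₁ : deriv u t₀ ≠ 0) :
    w = (deriv w t₀ / deriv u t₀) • u := by
  set c := deriv w t₀ / deriv u t₀
  have hc : deriv (w - c • u) t₀ = 0 := by
    rw [deriv_sub (hw.differentiable t₀) ((hu.differentiable t₀).const_smul c),
      deriv_const_smul c (hu.differentiable t₀), smul_eq_mul, div_mul_cancel₀ _ hu₁, sub_self]
  exact sub_eq_zero.1 <|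
    (hw.sub (hu.const_smul c)).eq_zero_of_deriv_eq_zero hκ (by simp [hu₀, hw₀]) hc

end IsJacobi

theorem Disconjugate.eq_of_apply_eq_zero {κ z : ℝ → ℝ} (hdis : Disconjugate κ)
    (hz : IsJacobi κ z) {t : ℝ} (ht : z t ≠ 0) {a b : ℝ} (ha : z a = 0) (hb : z b = 0) :
    a = b := by
  by_contra hab
  exact ht (hdis z hz a b hab ha hb t)

def IsGreenFamily (κ : ℝ → ℝ) (Z : ℝ → ℝ → ℝ) : Prop :=
  ∀ T : ℝ, T ≠ 0 → IsJacobi κ (Z T) ∧ Z T 0 = 1 ∧ Z T T = 0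

namespace IsGreenFamily

variable {κ : ℝ → ℝ} {Z : ℝ → ℝ → ℝ}

theorem apply_pos_of_notMem_uIcc (hZ : IsGreenFamily κ Z) (hdis : Disconjugate κ) {T s : ℝ}
    (hT : T ≠ 0) (hs : T ∉ uIcc 0 s) : 0 < Z T s := by
  obtain ⟨hJ, h₀, hT₀⟩ := hZ T hT
  refine isPreconnected_uIcc.pos_of_ne_zero hJ.1.continuous.continuousOn (fun x hx hx₀ => hs ?_)
    left_mem_uIcc (h₀ ▸ one_pos) right_mem_uIcc
  rwa [hdis.eq_of_apply_eq_zero hJ (h₀ ▸ one_ne_zero) hx₀ hT₀] at hx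

theorem exists_isJacobi_sign_eq (hκ : Continuous κ) (hZ : IsGreenFamily κ Z)
    (hdis : Disconjugate κ) :
    ∃ u, IsJacobi κ u ∧ u 0 = 0 ∧ 0 < deriv u 0 ∧
      (∀ t, 0 < t → 0 < u t) ∧ ∀ t, t < 0 → u t < 0 := by
  obtain ⟨hJ₁, h₁₀, h₁₁⟩ := hZ 1 one_ne_zero
  obtain ⟨hJm, hm₀, hmm⟩ := hZ (-1) (by norm_num)
  set u := Z (-1) - Z 1
  have hu : IsJacobi κ u := hJm.sub hJ₁
  have hu₀ : u 0 = 0 := by simp [u, h₁₀, hm₀]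
  have hu₁ : 0 < u 1 := by
    simpa [u, h₁₁] using
      hZ.apply_pos_of_notMem_uIcc hdis (s := 1) (by norm_num) (by simp [uIcc_of_le])
  have hum : u (-1) < 0 := by
    simpa [u, hmm] using
      hZ.apply_pos_of_notMem_uIcc hdis (s := -1) one_ne_zero (by simp [uIcc_of_ge])
  have hne : ∀ t, t ≠ 0 → u t ≠ 0 := fun t ht hut =>
    ht (hdis.eq_of_apply_eq_zero hu hu₁.ne' hut hu₀)
  have hpos : ∀ t, 0 < t → 0 < u t := fun t ht =>
    isPreconnected_Ioi.pos_of_ne_zero hu.1.continuous.continuousOn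
      (fun x hx => hne x (ne_of_gt hx)) (mem_Ioi.2 one_pos) hu₁ ht
  have hneg : ∀ t, t < 0 → u t < 0 := fun t ht => neg_pos.1 <|
    isPreconnected_Iio.pos_of_ne_zero (f := -u) hu.1.continuous.neg.continuousOn
      (fun x hx => neg_ne_zero.2 (hne x (ne_of_lt hx))) (mem_Iio.2 neg_one_lt_zero)
      (neg_pos.2 hum) ht
  have hd : deriv u 0 ≠ 0 := fun hd =>
    hu₁.ne' (congrFun (hu.eq_zero_of_deriv_eq_zero hκ hu₀ hd) 1)
  have hmin : IsMinOn u (Ici 0) 0 := isMinOn_iff.2 fun t (ht : 0 ≤ t) => by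
    rcases ht.eq_or_lt with rfl | ht
    · exact le_rfl
    · rw [hu₀]; exact (hpos t ht).le
  have hd_nonneg := (hu.differentiable 0).hasDerivAt.nonneg_of_isMinOn_Ici hmin
  exact ⟨u, hu, hu₀, lt_of_le_of_ne hd_nonneg (Ne.symm hd), hpos, hneg⟩

theorem apply_mul_deriv_eq (hκ : Continuous κ) (hZ : IsGreenFamily κ Z) {u : ℝ → ℝ}
    (hu : IsJacobi κ u) (hu₀ : u 0 = 0) (hu₁ : deriv u 0 ≠ 0) {S T : ℝ} (hS : S ≠ 0) (hT : T ≠ 0) :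
    Z S T * deriv u 0 = (deriv (Z S) 0 - deriv (Z T) 0) * u T := by
  obtain ⟨hJS, hS₀, -⟩ := hZ S hS
  obtain ⟨hJT, hT₀, hTT⟩ := hZ T hT
  have h := congrFun (hu.eq_smul_of_apply_eq_zero hκ (hJS.sub hJT) hu₀ (by simp [hS₀, hT₀]) hu₁) T
  simp only [Pi.sub_apply, Pi.smul_apply, smul_eq_mul, hTT, sub_zero,
    deriv_sub (hJS.differentiable 0) (hJT.differentiable 0)] at h
  rw [h]
  field_simp

theorem deriv_lt_of_pos (hκ : Continuous κ) (hZ : IsGreenFamily κ Z) (hdis : Disconjugate κ)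
    {S T : ℝ} (hT : 0 < T) (hS : S ∉ uIcc 0 T) : deriv (Z T) 0 < deriv (Z S) 0 := by
  obtain ⟨u, hu, hu₀, hd, hpos, -⟩ := hZ.exists_isJacobi_sign_eq hκ hdis
  have hS₀ : S ≠ 0 := by rintro rfl; exact hS left_mem_uIcc
  have h := mul_pos (hZ.apply_pos_of_notMem_uIcc hdis hS₀ hS) hd
  rw [hZ.apply_mul_deriv_eq hκ hu hu₀ hd.ne' hS₀ hT.ne'] at h
  exact sub_pos.1 (pos_of_mul_pos_left h (hpos T hT).le)

theorem deriv_lt_of_neg (hκ : Continuous κ) (hZ : IsGreenFamily κ Z) (hdis : Disconjugate κ)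
    {S T : ℝ} (hT : T < 0) (hS : S ∉ uIcc 0 T) : deriv (Z S) 0 < deriv (Z T) 0 := by
  obtain ⟨u, hu, hu₀, hd, -, hneg⟩ := hZ.exists_isJacobi_sign_eq hκ hdis
  have hS₀ : S ≠ 0 := by rintro rfl; exact hS left_mem_uIcc
  have h := mul_pos (hZ.apply_pos_of_notMem_uIcc hdis hS₀ hS) hd
  rw [hZ.apply_mul_deriv_eq hκ hu hu₀ hd.ne' hS₀ hT.ne] at h
  exact sub_neg.1 (neg_of_mul_pos_left h (hneg T hT).le)

theorem strictMonoOn_Ioi (hκ : Continuous κ) (hZ : IsGreenFamily κ Z) (hdis : Disconjugate κ) :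
    StrictMonoOn (fun T => deriv (Z T) 0) (Ioi 0) := fun T (hT : 0 < T) S _ hTS =>
  hZ.deriv_lt_of_pos hκ hdis hT (by simp [uIcc_of_le hT.le, hTS])

theorem strictMonoOn_Iio (hκ : Continuous κ) (hZ : IsGreenFamily κ Z) (hdis : Disconjugate κ) :
    StrictMonoOn (fun T => deriv (Z T) 0) (Iio 0) := fun S _ T (hT : T < 0) hST =>
  hZ.deriv_lt_of_neg hκ hdis hT (by simp [uIcc_of_ge hT.le, hST])

end IsGreenFamily

theorem green_limits_general (κ : ℝ → ℝ) (hκ : Continuous κ)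
    (hdis : Disconjugate κ)
    (Z : ℝ → ℝ → ℝ)
    (hZ : ∀ T : ℝ, T ≠ 0 → IsJacobi κ (Z T) ∧ Z T 0 = 1 ∧ Z T T = 0) :
    (∃ L : ℝ, Tendsto (fun T => deriv (Z T) 0) atTop (nhds L)) ∧
      (∃ L : ℝ, Tendsto (fun T => deriv (Z T) 0) atBot (nhds L)) := by
  have hZ : IsGreenFamily κ Z := hZ
  constructor
  · refine MonotoneOn.exists_tendsto_atTop (c := 1)
      ((hZ.strictMonoOn_Ioi hκ hdis).monotoneOn.mono (Ici_subset_Ioi.2 one_pos))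
      ⟨deriv (Z (-1)) 0, ?_⟩
    rintro _ ⟨T, hT : 1 ≤ T, rfl⟩
    exact (hZ.deriv_lt_of_pos hκ hdis (one_pos.trans_le hT)
      (by simp [uIcc_of_le (zero_le_one.trans hT)])).le
  · refine MonotoneOn.exists_tendsto_atBot (c := -1)
      ((hZ.strictMonoOn_Iio hκ hdis).monotoneOn.mono (Iic_subset_Iio.2 neg_one_lt_zero))
      ⟨deriv (Z 1) 0, ?_⟩
    rintro _ ⟨T, hT : T ≤ -1, rfl⟩
    exact (hZ.deriv_lt_of_neg hκ hdis (hT.trans_lt neg_one_lt_zero)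
      (by simp [uIcc_of_ge (hT.trans neg_one_lt_zero.le)])).le

/-- Green's lemma: if `κ` is continuous, bounded and disconjugate, and for each
`T ≠ 0` the function `Z T` is the Jacobi solution with `Z T 0 = 1` and
`Z T T = 0`, then `(Z T)'(0)` converges as `T → +∞` and as `T → -∞`. -/
theorem green_limits (κ : ℝ → ℝ) (hκ : Continuous κ)
    (hbd : ∃ C : ℝ, ∀ t, |κ t| ≤ C) (hdis : Disconjugate κ)
    (Z : ℝ → ℝ → ℝ)
    (hZ : ∀ T : ℝ, T ≠ 0 → IsJacobi κ (Z T) ∧ Z T 0 = 1 ∧ Z T T = 0) :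
    (∃ L : ℝ, Tendsto (fun T => deriv (Z T) 0) atTop (nhds L)) ∧
      (∃ L : ℝ, Tendsto (fun T => deriv (Z T) 0) atBot (nhds L)) :=
  green_limits_general κ hκ hdis Z hZ
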